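/- arXiv:2212.10780 — 2 statements merged into one kernel-verified Lean document; each statement's English description precedes it below -/
import Mathlib

section
/- If ‖·‖_α is a uniform crossnorm, then for all φ ∈ B[X,V]* and η ∈ B[Y,W]*, the tensor functional φ⊗η is bounded on (B[X,V]⊗B[Y,W], ‖·‖_{[α,α]}) with ‖φ⊗η‖_{*[α,α]} ≤ ‖φ‖·‖η‖; consequently B[X,V]*⊗B[Y,W]* ⊆ (B[X,V]⊗_{[α,α]}B[Y,W])*. -/
/-!
Slicing `L` with `η` gives an operator `R ∈ B[X,V]` with `(φ ⊗ η) L = φ R`, so it suffices to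
bound `‖R‖ ≤ ‖η‖ c`, where `c` is the `[α,α]`-norm of `L`. Testing `R` against `v ∘ evₓ` and slicing
once more reduces everything to the numbers `((v ∘ evₓ) ⊗ (w ∘ ev_y)) L = (v ⊗ w)(L (x ⊗ y))`,
which are at most `‖v‖ ‖w‖ c ‖x‖ ‖y‖` because `α` is reasonable on `V ⊗ W` and a crossnorm on
`X ⊗ Y`.
-/

open scoped TensorProduct
open TensorProduct

noncomputable section

variable (𝕜 : Type*) [RCLike 𝕜]
variable {E F G H : Type*}
  [NormedAddCommGroup E] [NormedSpace 𝕜 E]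
  [NormedAddCommGroup F] [NormedSpace 𝕜 F]
  [NormedAddCommGroup G] [NormedSpace 𝕜 G]
  [NormedAddCommGroup H] [NormedSpace 𝕜 H]

/-- `N` is a norm on the `𝕜`-module `M`. -/
def IsNormOn {M : Type*} [AddCommGroup M] [Module 𝕜 M] (N : M → ℝ) : Prop :=
  (∀ u, N u = 0 ↔ u = 0) ∧ (∀ (c : 𝕜) (u : M), N (c • u) = ‖c‖ * N u) ∧
    (∀ u v : M, N (u + v) ≤ N u + N v)

/-- The linear functional `f ⊗ g` on `E ⊗ F`, with `(f ⊗ g)(x ⊗ y) = f x * g y`. -/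
def dualTensorFun (f : E →L[𝕜] 𝕜) (g : F →L[𝕜] 𝕜) : E ⊗[𝕜] F →ₗ[𝕜] 𝕜 :=
  (TensorProduct.lid 𝕜 𝕜).toLinearMap ∘ₗ
    TensorProduct.map (f : E →ₗ[𝕜] 𝕜) (g : F →ₗ[𝕜] 𝕜)

/-- The injective norm on the algebraic tensor product of normed spaces. -/
def injNorm (u : E ⊗[𝕜] F) : ℝ :=
  sSup {r | ∃ (f : E →L[𝕜] 𝕜) (g : F →L[𝕜] 𝕜),
    ‖f‖ ≤ 1 ∧ ‖g‖ ≤ 1 ∧ r = ‖dualTensorFun 𝕜 f g u‖}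

/-- The projective norm on the algebraic tensor product of normed spaces. -/
def projNorm (u : E ⊗[𝕜] F) : ℝ :=
  sInf {r | ∃ l : List (E × F), u = (l.map fun p => p.1 ⊗ₜ[𝕜] p.2).sum ∧
    r = (l.map fun p => ‖p.1‖ * ‖p.2‖).sum}

/-- `N` is a reasonable crossnorm on `E ⊗ F`: it is a norm, `N (x ⊗ y) ≤ ‖x‖‖y‖`, and every
`f ⊗ g` with `f, g` continuous functionals is bounded with dual norm at most `‖f‖‖g‖`. -/
def IsReasonableCrossnorm (N : E ⊗[𝕜] F → ℝ) : Prop :=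
  IsNormOn 𝕜 N ∧ (∀ (x : E) (y : F), N (x ⊗ₜ[𝕜] y) ≤ ‖x‖ * ‖y‖) ∧
    ∀ (f : E →L[𝕜] 𝕜) (g : F →L[𝕜] 𝕜) (u : E ⊗[𝕜] F),
      ‖dualTensorFun 𝕜 f g u‖ ≤ ‖f‖ * ‖g‖ * N u

/-- `T` is bounded from `(E ⊗ F, Nd)` to `(G ⊗ H, Nc)`. -/
def IsBddOn (Nd : E ⊗[𝕜] F → ℝ) (Nc : G ⊗[𝕜] H → ℝ)
    (T : E ⊗[𝕜] F →ₗ[𝕜] G ⊗[𝕜] H) : Prop :=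
  ∃ c : ℝ, 0 ≤ c ∧ ∀ u, Nc (T u) ≤ c * Nd u

/-- The operator norm of `T` from `(E ⊗ F, Nd)` to `(G ⊗ H, Nc)`. -/
def opNormOn (Nd : E ⊗[𝕜] F → ℝ) (Nc : G ⊗[𝕜] H → ℝ)
    (T : E ⊗[𝕜] F →ₗ[𝕜] G ⊗[𝕜] H) : ℝ :=
  sInf {c | 0 ≤ c ∧ ∀ u, Nc (T u) ≤ c * Nd u}

/-- The dual norm of a linear functional `φ` on `(E ⊗ F, N)`. -/
def dualNormOn (N : E ⊗[𝕜] F → ℝ) (φ : E ⊗[𝕜] F →ₗ[𝕜] 𝕜) : ℝ :=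
  sInf {c | 0 ≤ c ∧ ∀ u, ‖φ u‖ ≤ c * N u}

/-- The pair of norms `(NA, NB)` is uniform: `A ⊗ B` is bounded with bound `‖A‖‖B‖`. -/
def IsUniformPair (NA : E ⊗[𝕜] F → ℝ) (NB : G ⊗[𝕜] H → ℝ) : Prop :=
  ∀ (A : E →L[𝕜] G) (B : F →L[𝕜] H) (u : E ⊗[𝕜] F),
    NB (TensorProduct.map (A : E →ₗ[𝕜] G) (B : F →ₗ[𝕜] H) u) ≤ ‖A‖ * ‖B‖ * NA u

/-- The canonical action of `B[E,G] ⊗ B[F,H]` as linear maps from `E ⊗ F` to `G ⊗ H`,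
sending `Σⱼ Aⱼ ⊗ Bⱼ` to `Σᵢ xᵢ ⊗ yᵢ ↦ Σⱼ Σᵢ Aⱼxᵢ ⊗ Bⱼyᵢ`. -/
def opT : ((E →L[𝕜] G) ⊗[𝕜] (F →L[𝕜] H)) →ₗ[𝕜] (E ⊗[𝕜] F →ₗ[𝕜] G ⊗[𝕜] H) :=
  (TensorProduct.homTensorHomMap (RingHom.id 𝕜) E F G H) ∘ₗ
    TensorProduct.map (ContinuousLinearMap.coeLM 𝕜) (ContinuousLinearMap.coeLM 𝕜)

lemma IsNormOn.nonneg {M : Type*} [AddCommGroup M] [Module 𝕜 M] {N : M → ℝ}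
    (hN : IsNormOn 𝕜 N) (u : M) : 0 ≤ N u := by
  have hneg : N (-u) = N u := by simpa using hN.2.1 (-1 : 𝕜) u
  have htri := hN.2.2 u (-u)
  rw [add_neg_cancel, (hN.1 0).2 rfl, hneg] at htri
  linarith

def rightSlice (g : F →L[𝕜] 𝕜) : E ⊗[𝕜] F →ₗ[𝕜] E :=
  (TensorProduct.rid 𝕜 E).toLinearMap ∘ₗ TensorProduct.map LinearMap.id (g : F →ₗ[𝕜] 𝕜)

def leftSlice (f : E →L[𝕜] 𝕜) : E ⊗[𝕜] F →ₗ[𝕜] F :=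
  (TensorProduct.lid 𝕜 F).toLinearMap ∘ₗ TensorProduct.map (f : E →ₗ[𝕜] 𝕜) LinearMap.id

lemma dualTensorFun_eq_apply_rightSlice (f : E →L[𝕜] 𝕜) (g : F →L[𝕜] 𝕜) (u : E ⊗[𝕜] F) :
    dualTensorFun 𝕜 f g u = f (rightSlice 𝕜 g u) := by
  induction u using TensorProduct.induction_on with
  | zero => simp
  | tmul x y => simp [dualTensorFun, rightSlice, mul_comm]
  | add u v hu hv => simp [hu, hv]

lemma dualTensorFun_eq_apply_leftSlice (f : E →L[𝕜] 𝕜) (g : F →L[𝕜] 𝕜) (u : E ⊗[𝕜] F) :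
    dualTensorFun 𝕜 f g u = g (leftSlice 𝕜 f u) := by
  induction u using TensorProduct.induction_on with
  | zero => simp
  | tmul x y => simp [dualTensorFun, leftSlice]
  | add u v hu hv => simp [hu, hv]

lemma ContinuousLinearMap.opNorm_le_of_forall_dual {T : E →L[𝕜] G} {K : ℝ} (hK : 0 ≤ K)
    (h : ∀ (v : G →L[𝕜] 𝕜) (x : E), ‖v (T x)‖ ≤ K * ‖v‖ * ‖x‖) : ‖T‖ ≤ K :=
  T.opNorm_le_bound hK fun x =>
    NormedSpace.norm_le_dual_bound 𝕜 _ (by positivity) fun v => by linarith [h v x]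

lemma norm_rightSlice_le {F' : Type*} [NormedAddCommGroup F'] [NormedSpace 𝕜 F']
    (g : F' →L[𝕜] 𝕜) (L : (E →L[𝕜] G) ⊗[𝕜] F') {K : ℝ} (hK : 0 ≤ K)
    (h : ∀ (v : G →L[𝕜] 𝕜) (x : E),
      ‖dualTensorFun 𝕜 (v.comp (ContinuousLinearMap.apply 𝕜 G x)) g L‖ ≤ K * ‖v‖ * ‖x‖) :
    ‖rightSlice 𝕜 g L‖ ≤ K :=
  ContinuousLinearMap.opNorm_le_of_forall_dual 𝕜 hK fun v x => by
    simpa [dualTensorFun_eq_apply_rightSlice] using h v x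

lemma norm_leftSlice_le {E' : Type*} [NormedAddCommGroup E'] [NormedSpace 𝕜 E']
    (f : E' →L[𝕜] 𝕜) (L : E' ⊗[𝕜] (F →L[𝕜] H)) {K : ℝ} (hK : 0 ≤ K)
    (h : ∀ (w : H →L[𝕜] 𝕜) (y : F),
      ‖dualTensorFun 𝕜 f (w.comp (ContinuousLinearMap.apply 𝕜 H y)) L‖ ≤ K * ‖w‖ * ‖y‖) :
    ‖leftSlice 𝕜 f L‖ ≤ K :=
  ContinuousLinearMap.opNorm_le_of_forall_dual 𝕜 hK fun w y => by
    simpa [dualTensorFun_eq_apply_leftSlice] using h w y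

lemma norm_dualTensorFun_le_of_forall_eval (φ : (E →L[𝕜] G) →L[𝕜] 𝕜)
    (η : (F →L[𝕜] H) →L[𝕜] 𝕜) (L : (E →L[𝕜] G) ⊗[𝕜] (F →L[𝕜] H)) {K : ℝ} (hK : 0 ≤ K)
    (h : ∀ (v : G →L[𝕜] 𝕜) (w : H →L[𝕜] 𝕜) (x : E) (y : F),
      ‖dualTensorFun 𝕜 (v.comp (ContinuousLinearMap.apply 𝕜 G x))
        (w.comp (ContinuousLinearMap.apply 𝕜 H y)) L‖ ≤ K * ‖v‖ * ‖w‖ * ‖x‖ * ‖y‖) :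
    ‖dualTensorFun 𝕜 φ η L‖ ≤ ‖φ‖ * ‖η‖ * K := by
  have hslice : ‖rightSlice 𝕜 η L‖ ≤ ‖η‖ * K := by
    refine norm_rightSlice_le 𝕜 η L (by positivity) fun v x => ?_
    have hvx : ‖leftSlice 𝕜 (v.comp (ContinuousLinearMap.apply 𝕜 G x)) L‖ ≤ K * ‖v‖ * ‖x‖ :=
      norm_leftSlice_le 𝕜 _ L (by positivity) fun w y => by linarith [h v w x y]
    calc ‖dualTensorFun 𝕜 (v.comp (ContinuousLinearMap.apply 𝕜 G x)) η L‖
        ≤ ‖η‖ * ‖leftSlice 𝕜 (v.comp (ContinuousLinearMap.apply 𝕜 G x)) L‖ := by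
          rw [dualTensorFun_eq_apply_leftSlice]; exact η.le_opNorm _
      _ ≤ ‖η‖ * (K * ‖v‖ * ‖x‖) := by gcongr
      _ = ‖η‖ * K * ‖v‖ * ‖x‖ := by ring
  calc ‖dualTensorFun 𝕜 φ η L‖ ≤ ‖φ‖ * ‖rightSlice 𝕜 η L‖ := by
        rw [dualTensorFun_eq_apply_rightSlice]; exact φ.le_opNorm _
    _ ≤ ‖φ‖ * (‖η‖ * K) := by gcongr
    _ = ‖φ‖ * ‖η‖ * K := by ring

lemma dualTensorFun_opT_tmul (v : G →L[𝕜] 𝕜) (w : H →L[𝕜] 𝕜) (x : E) (y : F)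
    (L : (E →L[𝕜] G) ⊗[𝕜] (F →L[𝕜] H)) :
    dualTensorFun 𝕜 v w (opT 𝕜 L (x ⊗ₜ[𝕜] y)) =
      dualTensorFun 𝕜 (v.comp (ContinuousLinearMap.apply 𝕜 G x))
        (w.comp (ContinuousLinearMap.apply 𝕜 H y)) L := by
  induction L using TensorProduct.induction_on with
  | zero => simp
  | tmul A B => simp [dualTensorFun, opT, ContinuousLinearMap.coeLM]
  | add L₁ L₂ h₁ h₂ => simp [h₁, h₂]

section OpNormOn

variable {NA : E ⊗[𝕜] F → ℝ} {NB : G ⊗[𝕜] H → ℝ}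

lemma isBddOn_opT (hNB : IsNormOn 𝕜 NB) (hu : IsUniformPair 𝕜 NA NB)
    (L : (E →L[𝕜] G) ⊗[𝕜] (F →L[𝕜] H)) : IsBddOn 𝕜 NA NB (opT 𝕜 L) := by
  induction L using TensorProduct.induction_on with
  | zero => exact ⟨0, le_rfl, fun u => by simp [(hNB.1 0).2 rfl]⟩
  | tmul A B =>
    exact ⟨‖A‖ * ‖B‖, by positivity, fun u => by
      simpa [opT, ContinuousLinearMap.coeLM] using hu A B u⟩
  | add L₁ L₂ h₁ h₂ =>
    obtain ⟨c₁, hc₁, h₁⟩ := h₁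
    obtain ⟨c₂, hc₂, h₂⟩ := h₂
    refine ⟨c₁ + c₂, by positivity, fun u => ?_⟩
    calc NB (opT 𝕜 (L₁ + L₂) u) ≤ NB (opT 𝕜 L₁ u) + NB (opT 𝕜 L₂ u) := by
          simpa using hNB.2.2 (opT 𝕜 L₁ u) (opT 𝕜 L₂ u)
      _ ≤ (c₁ + c₂) * NA u := by linarith [h₁ u, h₂ u]

variable {T : E ⊗[𝕜] F →ₗ[𝕜] G ⊗[𝕜] H}

lemma opNormOn_nonneg (hT : IsBddOn 𝕜 NA NB T) : 0 ≤ opNormOn 𝕜 NA NB T :=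
  le_csInf hT fun _ hc => hc.1

lemma le_opNormOn_mul (hNA : ∀ u, 0 ≤ NA u) (hT : IsBddOn 𝕜 NA NB T) (u : E ⊗[𝕜] F) :
    NB (T u) ≤ opNormOn 𝕜 NA NB T * NA u := by
  rcases (hNA u).eq_or_lt with h | h
  · obtain ⟨c, -, hc⟩ := hT
    simpa [← h] using hc u
  · rw [← div_le_iff₀ h]
    exact le_csInf hT fun c hc => (div_le_iff₀ h).2 (hc.2 u)

end OpNormOn

variable {X Y V W : Type*}
  [NormedAddCommGroup X] [NormedSpace 𝕜 X]
  [NormedAddCommGroup Y] [NormedSpace 𝕜 Y]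
  [NormedAddCommGroup V] [NormedSpace 𝕜 V]
  [NormedAddCommGroup W] [NormedSpace 𝕜 W]

/-- `φ ⊗ η` is bounded on `(B[X,V] ⊗ B[Y,W], ‖·‖_{[α,α]})` with norm at most
`‖φ‖‖η‖`. -/
theorem stmt11 (NA : X ⊗[𝕜] Y → ℝ) (NB : V ⊗[𝕜] W → ℝ)
    (hNA : IsReasonableCrossnorm 𝕜 NA) (hNB : IsReasonableCrossnorm 𝕜 NB)
    (hu : IsUniformPair 𝕜 NA NB) :
    ∀ (φ : (X →L[𝕜] V) →L[𝕜] 𝕜) (η : (Y →L[𝕜] W) →L[𝕜] 𝕜)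
      (L : (X →L[𝕜] V) ⊗[𝕜] (Y →L[𝕜] W)),
        ‖dualTensorFun 𝕜 φ η L‖ ≤ ‖φ‖ * ‖η‖ * opNormOn 𝕜 NA NB (opT 𝕜 L) := by
  intro φ η L
  have hT := isBddOn_opT 𝕜 hNB.1 hu L
  set c := opNormOn 𝕜 NA NB (opT 𝕜 L)
  have hc : 0 ≤ c := opNormOn_nonneg 𝕜 hT
  refine norm_dualTensorFun_le_of_forall_eval 𝕜 φ η L hc fun v w x y => ?_
  calc ‖dualTensorFun 𝕜 (v.comp (ContinuousLinearMap.apply 𝕜 V x))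
        (w.comp (ContinuousLinearMap.apply 𝕜 W y)) L‖
      = ‖dualTensorFun 𝕜 v w (opT 𝕜 L (x ⊗ₜ[𝕜] y))‖ := by rw [dualTensorFun_opT_tmul]
    _ ≤ ‖v‖ * ‖w‖ * NB (opT 𝕜 L (x ⊗ₜ[𝕜] y)) := hNB.2.2 v w _
    _ ≤ ‖v‖ * ‖w‖ * (c * NA (x ⊗ₜ[𝕜] y)) := by
        gcongr; exact le_opNormOn_mul 𝕜 hNA.1.nonneg hT _
    _ ≤ ‖v‖ * ‖w‖ * (c * (‖x‖ * ‖y‖)) := by gcongr; exact hNA.2.1 x y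
    _ = c * ‖v‖ * ‖w‖ * ‖x‖ * ‖y‖ := by ring
end
end

section
/- The operator norm ‖·‖_{[π,ε]} from (X⊗Y,‖·‖_π) to (V⊗W,‖·‖_ε), restricted to B[X,V]⊗B[Y,W], satisfies ‖L‖_ε ≤ ‖L‖_{[π,ε]} ≤ ‖L‖_π for every L ∈ B[X,V]⊗B[Y,W], and hence is a reasonable crossnorm on B[X,V]⊗B[Y,W]. -/
open scoped TensorProduct
open TensorProduct

noncomputable section

variable (𝕜 : Type*) [RCLike 𝕜]
variable {E F G H : Type*}
  [NormedAddCommGroup E] [NormedSpace 𝕜 E]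
  [NormedAddCommGroup F] [NormedSpace 𝕜 F]
  [NormedAddCommGroup G] [NormedSpace 𝕜 G]
  [NormedAddCommGroup H] [NormedSpace 𝕜 H]

/-!
Upper bound: the injective norm is uniform, `ε((A ⊗ B) u) ≤ ‖A‖ ‖B‖ ε(u)`, so for any
representation `L = Σ Aᵢ ⊗ Bᵢ` we get `ε(L u) ≤ (Σ ‖Aᵢ‖ ‖Bᵢ‖) ε(u) ≤ (Σ ‖Aᵢ‖ ‖Bᵢ‖) π(u)`;
now take the infimum over representations.

Lower bound: slice `L` twice. For functionals `f`, `g` on `B[X,V]`, `B[Y,W]` we have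
`(f ⊗ g)(L) = f(R)` with `R = (id ⊗ g)(L) ∈ B[X,V]`; for `x ∈ X` and `φ ∈ V*`,
`φ(R x) = g(S)` with `S = (φ(· x) ⊗ id)(L) ∈ B[Y,W]`; and `ψ(S y) = (φ ⊗ ψ)(L(x ⊗ y))`.
So every `c` with `ε(L u) ≤ c π(u)` bounds `‖S‖ / (‖x‖ ‖φ‖)`, then `‖R‖ / ‖g‖`, then
`|(f ⊗ g)(L)| / (‖f‖ ‖g‖)`.

The norm axioms are inherited from `ε`. Its definiteness reduces to a finite-dimensional subspace of
the right factor, where the coordinate functionals of a basis extend to continuous functionals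
by Hahn–Banach.
-/

section

variable {𝕜}

@[simp]
lemma dualTensorFun_tmul (f : E →L[𝕜] 𝕜) (g : F →L[𝕜] 𝕜) (x : E) (y : F) :
    dualTensorFun 𝕜 f g (x ⊗ₜ y) = f x * g y := by
  simp [dualTensorFun]

lemma dualTensorFun_smul_smul (a b : 𝕜) (f : E →L[𝕜] 𝕜) (g : F →L[𝕜] 𝕜) :
    dualTensorFun 𝕜 (a • f) (b • g) = (a * b) • dualTensorFun 𝕜 f g :=
  TensorProduct.ext' fun x y => by simp; ring

lemma dualTensorFun_map (f : G →L[𝕜] 𝕜) (g : H →L[𝕜] 𝕜) (A : E →L[𝕜] G) (B : F →L[𝕜] H)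
    (u : E ⊗[𝕜] F) :
    dualTensorFun 𝕜 f g (map (A : E →ₗ[𝕜] G) (B : F →ₗ[𝕜] H) u) =
      dualTensorFun 𝕜 (f ∘L A) (g ∘L B) u := by
  induction u with
  | zero => simp
  | tmul x y => simp
  | add u v hu hv => simp only [map_add, hu, hv]

lemma dualTensorFun_eq_apply_rid (f : E →L[𝕜] 𝕜) (g : F →L[𝕜] 𝕜) (u : E ⊗[𝕜] F) :
    dualTensorFun 𝕜 f g u = f (TensorProduct.rid 𝕜 E ((g : F →ₗ[𝕜] 𝕜).lTensor E u)) := by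
  induction u with
  | zero => simp
  | tmul x y => simp [mul_comm]
  | add u v hu hv => simp only [map_add, hu, hv]

lemma dualTensorFun_eq_apply_lid (f : E →L[𝕜] 𝕜) (g : F →L[𝕜] 𝕜) (u : E ⊗[𝕜] F) :
    dualTensorFun 𝕜 f g u = g (TensorProduct.lid 𝕜 F ((f : E →ₗ[𝕜] 𝕜).rTensor F u)) := by
  induction u with
  | zero => simp
  | tmul x y => simp
  | add u v hu hv => simp only [map_add, hu, hv]

lemma exists_list_sum_tmul_eq (u : E ⊗[𝕜] F) :
    ∃ l : List (E × F), u = (l.map fun p => p.1 ⊗ₜ[𝕜] p.2).sum := by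
  induction u with
  | zero => exact ⟨[], by simp⟩
  | tmul x y => exact ⟨[(x, y)], by simp⟩
  | add u v hu hv =>
    obtain ⟨l₁, rfl⟩ := hu
    obtain ⟨l₂, rfl⟩ := hv
    exact ⟨l₁ ++ l₂, by simp⟩

lemma sum_map_norm_mul_norm_nonneg {M N : Type*} [SeminormedAddCommGroup M]
    [SeminormedAddCommGroup N] (l : List (M × N)) : 0 ≤ (l.map fun p => ‖p.1‖ * ‖p.2‖).sum :=
  List.sum_nonneg fun _ hr => by
    obtain ⟨p, -, rfl⟩ := List.mem_map.1 hr
    positivity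

lemma projNorm_nonneg (u : E ⊗[𝕜] F) : 0 ≤ projNorm 𝕜 u :=
  Real.sInf_nonneg fun _ ⟨l, _, hr⟩ => hr ▸ sum_map_norm_mul_norm_nonneg l

lemma projNorm_le_of_eq {u : E ⊗[𝕜] F} (l : List (E × F))
    (hl : u = (l.map fun p => p.1 ⊗ₜ[𝕜] p.2).sum) :
    projNorm 𝕜 u ≤ (l.map fun p => ‖p.1‖ * ‖p.2‖).sum :=
  csInf_le ⟨0, fun _ ⟨l', _, hr⟩ => hr ▸ sum_map_norm_mul_norm_nonneg l'⟩ ⟨l, hl, rfl⟩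

lemma le_projNorm {u : E ⊗[𝕜] F} {a : ℝ}
    (h : ∀ l : List (E × F), u = (l.map fun p => p.1 ⊗ₜ[𝕜] p.2).sum →
      a ≤ (l.map fun p => ‖p.1‖ * ‖p.2‖).sum) :
    a ≤ projNorm 𝕜 u := by
  obtain ⟨l, hl⟩ := exists_list_sum_tmul_eq u
  exact le_csInf ⟨_, l, hl, rfl⟩ fun _ ⟨l, hl, hr⟩ => hr ▸ h l hl

lemma projNorm_tmul_le (x : E) (y : F) : projNorm 𝕜 (x ⊗ₜ[𝕜] y) ≤ ‖x‖ * ‖y‖ := by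
  simpa using projNorm_le_of_eq [(x, y)] (by simp)

lemma norm_dualTensorFun_list_sum_le {f : E →L[𝕜] 𝕜} {g : F →L[𝕜] 𝕜} (hf : ‖f‖ ≤ 1)
    (hg : ‖g‖ ≤ 1) (l : List (E × F)) :
    ‖dualTensorFun 𝕜 f g (l.map fun p => p.1 ⊗ₜ[𝕜] p.2).sum‖ ≤
      (l.map fun p => ‖p.1‖ * ‖p.2‖).sum := by
  induction l with
  | nil => simp
  | cons p l ih =>
    simp only [List.map_cons, List.sum_cons, map_add, dualTensorFun_tmul]
    refine (norm_add_le _ _).trans (add_le_add ?_ ih)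
    rw [norm_mul]
    exact mul_le_mul (f.le_of_opNorm_le hf p.1 |>.trans_eq (one_mul _))
      (g.le_of_opNorm_le hg p.2 |>.trans_eq (one_mul _)) (norm_nonneg _) (norm_nonneg _)

lemma norm_dualTensorFun_le_projNorm {f : E →L[𝕜] 𝕜} {g : F →L[𝕜] 𝕜} (hf : ‖f‖ ≤ 1)
    (hg : ‖g‖ ≤ 1) (u : E ⊗[𝕜] F) : ‖dualTensorFun 𝕜 f g u‖ ≤ projNorm 𝕜 u :=
  le_projNorm fun l hl => hl ▸ norm_dualTensorFun_list_sum_le hf hg l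

lemma injNorm_nonneg (u : E ⊗[𝕜] F) : 0 ≤ injNorm 𝕜 u :=
  Real.sSup_nonneg <| by rintro _ ⟨f, g, -, -, rfl⟩; positivity

lemma injNorm_le {u : E ⊗[𝕜] F} {c : ℝ} (hc : 0 ≤ c)
    (h : ∀ (f : E →L[𝕜] 𝕜) (g : F →L[𝕜] 𝕜), ‖f‖ ≤ 1 → ‖g‖ ≤ 1 → ‖dualTensorFun 𝕜 f g u‖ ≤ c) :
    injNorm 𝕜 u ≤ c :=
  Real.sSup_le (by rintro _ ⟨f, g, hf, hg, rfl⟩; exact h f g hf hg) hc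

lemma injNorm_le_projNorm (u : E ⊗[𝕜] F) : injNorm 𝕜 u ≤ projNorm 𝕜 u :=
  injNorm_le (projNorm_nonneg u) fun _ _ hf hg => norm_dualTensorFun_le_projNorm hf hg u

lemma norm_dualTensorFun_le_injNorm_of_norm_le_one {f : E →L[𝕜] 𝕜} {g : F →L[𝕜] 𝕜}
    (hf : ‖f‖ ≤ 1) (hg : ‖g‖ ≤ 1) (u : E ⊗[𝕜] F) :
    ‖dualTensorFun 𝕜 f g u‖ ≤ injNorm 𝕜 u :=
  le_csSup ⟨projNorm 𝕜 u, fun _ ⟨_, _, hf, hg, hr⟩ => hr ▸ norm_dualTensorFun_le_projNorm hf hg u⟩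
    ⟨f, g, hf, hg, rfl⟩

lemma norm_dualTensorFun_le_injNorm (f : E →L[𝕜] 𝕜) (g : F →L[𝕜] 𝕜) (u : E ⊗[𝕜] F) :
    ‖dualTensorFun 𝕜 f g u‖ ≤ ‖f‖ * ‖g‖ * injNorm 𝕜 u := by
  rcases eq_or_ne f 0 with rfl | hf
  · simp [dualTensorFun]
  rcases eq_or_ne g 0 with rfl | hg
  · simp [dualTensorFun]
  have h := norm_dualTensorFun_le_injNorm_of_norm_le_one (norm_smul_inv_norm (𝕜 := 𝕜) hf).le
    (norm_smul_inv_norm (𝕜 := 𝕜) hg).le u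
  rw [dualTensorFun_smul_smul, LinearMap.smul_apply, norm_smul, norm_mul, norm_inv, norm_inv,
    RCLike.norm_ofReal, RCLike.norm_ofReal, abs_norm, abs_norm] at h
  rwa [← mul_inv, inv_mul_le_iff₀ (by positivity)] at h

lemma injNorm_smul (c : 𝕜) (u : E ⊗[𝕜] F) : injNorm 𝕜 (c • u) = ‖c‖ * injNorm 𝕜 u := by
  rw [injNorm, injNorm, ← smul_eq_mul, ← Real.sSup_smul_of_nonneg (norm_nonneg c)]
  congr 1
  ext r
  simp only [Set.mem_ofPred_eq, Set.mem_smul_set, map_smul, smul_eq_mul, norm_mul]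
  constructor
  · rintro ⟨f, g, hf, hg, rfl⟩
    exact ⟨_, ⟨f, g, hf, hg, rfl⟩, rfl⟩
  · rintro ⟨_, ⟨f, g, hf, hg, rfl⟩, rfl⟩
    exact ⟨f, g, hf, hg, rfl⟩

lemma injNorm_zero : injNorm 𝕜 (0 : E ⊗[𝕜] F) = 0 := by
  simpa using injNorm_smul (0 : 𝕜) (0 : E ⊗[𝕜] F)

lemma injNorm_add_le (u v : E ⊗[𝕜] F) : injNorm 𝕜 (u + v) ≤ injNorm 𝕜 u + injNorm 𝕜 v :=
  injNorm_le (add_nonneg (injNorm_nonneg u) (injNorm_nonneg v)) fun f g hf hg => by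
    rw [map_add]
    exact (norm_add_le _ _).trans <| add_le_add
      (norm_dualTensorFun_le_injNorm_of_norm_le_one hf hg u)
      (norm_dualTensorFun_le_injNorm_of_norm_le_one hf hg v)

lemma isUniformPair_injNorm :
    IsUniformPair 𝕜 (injNorm 𝕜 : E ⊗[𝕜] F → ℝ) (injNorm 𝕜 : G ⊗[𝕜] H → ℝ) := by
  intro A B u
  have hu := injNorm_nonneg u
  refine injNorm_le (by positivity) fun f g hf hg => ?_
  have hfA : ‖f ∘L A‖ ≤ ‖A‖ := (f.opNorm_comp_le A).trans (mul_le_of_le_one_left (norm_nonneg A) hf)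
  have hgB : ‖g ∘L B‖ ≤ ‖B‖ := (g.opNorm_comp_le B).trans (mul_le_of_le_one_left (norm_nonneg B) hg)
  rw [dualTensorFun_map]
  exact (norm_dualTensorFun_le_injNorm _ _ u).trans (by gcongr)

@[simp]
lemma opT_tmul (A : E →L[𝕜] G) (B : F →L[𝕜] H) :
    opT 𝕜 (A ⊗ₜ B) = map (A : E →ₗ[𝕜] G) (B : F →ₗ[𝕜] H) := by
  simp [opT]

lemma injNorm_opT_list_sum_apply_le (l : List ((E →L[𝕜] G) × (F →L[𝕜] H))) (u : E ⊗[𝕜] F) :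
    injNorm 𝕜 (opT 𝕜 (l.map fun p => p.1 ⊗ₜ[𝕜] p.2).sum u) ≤
      (l.map fun p => ‖p.1‖ * ‖p.2‖).sum * injNorm 𝕜 u := by
  induction l with
  | nil => simp [injNorm_zero]
  | cons p l ih =>
    simp only [List.map_cons, List.sum_cons, map_add, LinearMap.add_apply, opT_tmul, add_mul]
    exact (injNorm_add_le _ _).trans (add_le_add (isUniformPair_injNorm p.1 p.2 u) ih)

section OpNormOn

variable {Nd : E ⊗[𝕜] F → ℝ} {Nc : G ⊗[𝕜] H → ℝ} {T T' : E ⊗[𝕜] F →ₗ[𝕜] G ⊗[𝕜] H}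

def opBounds (Nd : E ⊗[𝕜] F → ℝ) (Nc : G ⊗[𝕜] H → ℝ) (T : E ⊗[𝕜] F →ₗ[𝕜] G ⊗[𝕜] H) :
    Set ℝ :=
  {c | 0 ≤ c ∧ ∀ u, Nc (T u) ≤ c * Nd u}

lemma opNormOn_eq_sInf_opBounds : opNormOn 𝕜 Nd Nc T = sInf (opBounds Nd Nc T) := rfl

lemma bddBelow_opBounds : BddBelow (opBounds Nd Nc T) := ⟨0, fun _ hc => hc.1⟩

lemma opNormOn_nonneg_s14 : 0 ≤ opNormOn 𝕜 Nd Nc T :=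
  Real.sInf_nonneg fun _ hc => hc.1

lemma opNormOn_le {c : ℝ} (hc : 0 ≤ c) (h : ∀ u, Nc (T u) ≤ c * Nd u) :
    opNormOn 𝕜 Nd Nc T ≤ c :=
  csInf_le bddBelow_opBounds ⟨hc, h⟩

lemma le_opNormOn {a : ℝ} (hT : IsBddOn 𝕜 Nd Nc T)
    (h : ∀ c, 0 ≤ c → (∀ u, Nc (T u) ≤ c * Nd u) → a ≤ c) :
    a ≤ opNormOn 𝕜 Nd Nc T :=
  le_csInf hT fun c hc => h c hc.1 hc.2

lemma opNormOn_add_le (hNc : ∀ v w, Nc (v + w) ≤ Nc v + Nc w) (hT : IsBddOn 𝕜 Nd Nc T)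
    (hT' : IsBddOn 𝕜 Nd Nc T') :
    opNormOn 𝕜 Nd Nc (T + T') ≤ opNormOn 𝕜 Nd Nc T + opNormOn 𝕜 Nd Nc T' := by
  simp only [opNormOn_eq_sInf_opBounds]
  rw [← csInf_add (s := opBounds Nd Nc T) (t := opBounds Nd Nc T') hT bddBelow_opBounds hT'
    bddBelow_opBounds]
  refine csInf_le_csInf bddBelow_opBounds (Set.Nonempty.add hT hT') ?_
  rintro _ ⟨a, ⟨ha0, ha⟩, b, ⟨hb0, hb⟩, rfl⟩
  refine ⟨add_nonneg ha0 hb0, fun u => ?_⟩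
  rw [LinearMap.add_apply, add_mul]
  exact (hNc _ _).trans (add_le_add (ha u) (hb u))

lemma opNormOn_smul (hNc : ∀ (c : 𝕜) v, Nc (c • v) = ‖c‖ * Nc v) (c : 𝕜) :
    opNormOn 𝕜 Nd Nc (c • T) = ‖c‖ * opNormOn 𝕜 Nd Nc T := by
  rcases eq_or_ne c 0 with rfl | hc
  · rw [norm_zero, zero_mul]
    exact le_antisymm (opNormOn_le le_rfl fun u => by
      rw [LinearMap.smul_apply, hNc, norm_zero, zero_mul, zero_mul]) opNormOn_nonneg_s14
  have hc' : 0 < ‖c‖ := norm_pos_iff.2 hc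
  rw [opNormOn_eq_sInf_opBounds, opNormOn_eq_sInf_opBounds, ← smul_eq_mul,
    ← Real.sInf_smul_of_nonneg hc'.le]
  congr 1
  ext b
  simp only [opBounds, Set.mem_ofPred_eq, Set.mem_smul_set, LinearMap.smul_apply, hNc,
    smul_eq_mul]
  constructor
  · rintro ⟨hb0, hb⟩
    refine ⟨‖c‖⁻¹ * b, ⟨by positivity, fun u => ?_⟩, by field_simp⟩
    rw [mul_assoc, le_inv_mul_iff₀ hc']
    exact hb u
  · rintro ⟨a, ⟨ha0, ha⟩, rfl⟩
    exact ⟨by positivity, fun u => by rw [mul_assoc]; gcongr; exact ha u⟩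

end OpNormOn

lemma sum_map_norm_mul_norm_mem_opBounds_opT {L : (E →L[𝕜] G) ⊗[𝕜] (F →L[𝕜] H)}
    (l : List ((E →L[𝕜] G) × (F →L[𝕜] H))) (hl : L = (l.map fun p => p.1 ⊗ₜ[𝕜] p.2).sum) :
    (l.map fun p => ‖p.1‖ * ‖p.2‖).sum ∈ opBounds (projNorm 𝕜) (injNorm 𝕜) (opT 𝕜 L) := by
  refine ⟨sum_map_norm_mul_norm_nonneg l, fun u => ?_⟩
  subst hl
  exact (injNorm_opT_list_sum_apply_le l u).trans
    (mul_le_mul_of_nonneg_left (injNorm_le_projNorm u) (sum_map_norm_mul_norm_nonneg l))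

lemma isBddOn_opT_s14 (L : (E →L[𝕜] G) ⊗[𝕜] (F →L[𝕜] H)) :
    IsBddOn 𝕜 (projNorm 𝕜) (injNorm 𝕜) (opT 𝕜 L) :=
  let ⟨l, hl⟩ := exists_list_sum_tmul_eq L
  ⟨_, sum_map_norm_mul_norm_mem_opBounds_opT l hl⟩

lemma opNormOn_opT_le_projNorm (L : (E →L[𝕜] G) ⊗[𝕜] (F →L[𝕜] H)) :
    opNormOn 𝕜 (projNorm 𝕜) (injNorm 𝕜) (opT 𝕜 L) ≤ projNorm 𝕜 L :=
  le_projNorm fun l hl => csInf_le bddBelow_opBounds (sum_map_norm_mul_norm_mem_opBounds_opT l hl)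

lemma dualTensorFun_comp_apply_comp_apply (φ : G →L[𝕜] 𝕜) (ψ : H →L[𝕜] 𝕜) (x : E) (y : F)
    (L : (E →L[𝕜] G) ⊗[𝕜] (F →L[𝕜] H)) :
    dualTensorFun 𝕜 (φ ∘L ContinuousLinearMap.apply 𝕜 G x)
        (ψ ∘L ContinuousLinearMap.apply 𝕜 H y) L =
      dualTensorFun 𝕜 φ ψ (opT 𝕜 L (x ⊗ₜ y)) := by
  induction L with
  | zero => simp
  | tmul A B => simp
  | add L L' hL hL' => simp only [map_add, LinearMap.add_apply, hL, hL']

section Slices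

variable {L : (E →L[𝕜] G) ⊗[𝕜] (F →L[𝕜] H)} {c : ℝ}

lemma norm_lid_rTensor_comp_apply_le (hc : 0 ≤ c)
    (hL : ∀ x y, injNorm 𝕜 (opT 𝕜 L (x ⊗ₜ y)) ≤ c * (‖x‖ * ‖y‖)) (φ : G →L[𝕜] 𝕜) (x : E) :
    ‖TensorProduct.lid 𝕜 (F →L[𝕜] H)
      (((φ ∘L ContinuousLinearMap.apply 𝕜 G x : (E →L[𝕜] G) →L[𝕜] 𝕜) :
        (E →L[𝕜] G) →ₗ[𝕜] 𝕜).rTensor _ L)‖ ≤ c * ‖x‖ * ‖φ‖ := by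
  refine ContinuousLinearMap.opNorm_le_bound _ (by positivity) fun y => ?_
  refine NormedSpace.norm_le_dual_bound 𝕜 _ (by positivity) fun ψ => ?_
  rw [← ContinuousLinearMap.apply_apply y, ← ContinuousLinearMap.comp_apply,
    ← dualTensorFun_eq_apply_lid, dualTensorFun_comp_apply_comp_apply]
  calc _ ≤ ‖φ‖ * ‖ψ‖ * injNorm 𝕜 (opT 𝕜 L (x ⊗ₜ y)) := norm_dualTensorFun_le_injNorm _ _ _
    _ ≤ ‖φ‖ * ‖ψ‖ * (c * (‖x‖ * ‖y‖)) := by gcongr; exact hL x y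
    _ = c * ‖x‖ * ‖φ‖ * ‖y‖ * ‖ψ‖ := by ring

lemma norm_rid_lTensor_le (hc : 0 ≤ c)
    (hL : ∀ x y, injNorm 𝕜 (opT 𝕜 L (x ⊗ₜ y)) ≤ c * (‖x‖ * ‖y‖)) (g : (F →L[𝕜] H) →L[𝕜] 𝕜) :
    ‖TensorProduct.rid 𝕜 (E →L[𝕜] G) ((g : (F →L[𝕜] H) →ₗ[𝕜] 𝕜).lTensor _ L)‖ ≤ c * ‖g‖ := by
  refine ContinuousLinearMap.opNorm_le_bound _ (by positivity) fun x => ?_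
  refine NormedSpace.norm_le_dual_bound 𝕜 _ (by positivity) fun φ => ?_
  rw [← ContinuousLinearMap.apply_apply x, ← ContinuousLinearMap.comp_apply,
    ← dualTensorFun_eq_apply_rid, dualTensorFun_eq_apply_lid]
  calc _ ≤ ‖g‖ * _ := g.le_opNorm _
    _ ≤ ‖g‖ * (c * ‖x‖ * ‖φ‖) := by gcongr; exact norm_lid_rTensor_comp_apply_le hc hL φ x
    _ = c * ‖g‖ * ‖x‖ * ‖φ‖ := by ring

lemma injNorm_le_of_injNorm_opT_tmul_le (hc : 0 ≤ c)
    (hL : ∀ x y, injNorm 𝕜 (opT 𝕜 L (x ⊗ₜ y)) ≤ c * (‖x‖ * ‖y‖)) : injNorm 𝕜 L ≤ c := by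
  refine injNorm_le hc fun f g hf hg => ?_
  rw [dualTensorFun_eq_apply_rid]
  calc _ ≤ ‖f‖ * _ := f.le_opNorm _
    _ ≤ 1 * (c * 1) := by gcongr; exact (norm_rid_lTensor_le hc hL g).trans (by gcongr)
    _ = c := by ring

end Slices

lemma injNorm_le_opNormOn_opT (L : (E →L[𝕜] G) ⊗[𝕜] (F →L[𝕜] H)) :
    injNorm 𝕜 L ≤ opNormOn 𝕜 (projNorm 𝕜) (injNorm 𝕜) (opT 𝕜 L) :=
  le_opNormOn (isBddOn_opT_s14 L) fun _ hc hL => injNorm_le_of_injNorm_opT_tmul_le hc fun x y =>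
    (hL _).trans (mul_le_mul_of_nonneg_left (projNorm_tmul_le x y) hc)

lemma eq_zero_of_forall_dualTensorFun_eq_zero {u : E ⊗[𝕜] F}
    (h : ∀ (f : E →L[𝕜] 𝕜) (g : F →L[𝕜] 𝕜), dualTensorFun 𝕜 f g u = 0) : u = 0 := by
  obtain ⟨N, hN, hu⟩ := exists_finite_submodule_right_of_setFinite {u} (Set.finite_singleton u)
  obtain ⟨u₀, rfl⟩ := hu rfl
  let b := Module.finBasis 𝕜 N
  suffices equivFinsuppOfBasisRight b u₀ = 0 by simp_all
  ext i
  -- the `i`-th coordinate functional of `b` extends to a continuous functional on `F`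
  obtain ⟨g, hg⟩ := SeparatingDual.dualMap_surjective_iff.2 N.injective_subtype (b.coord i)
  refine SeparatingDual.eq_zero_of_forall_dual_eq_zero (R := 𝕜) fun f => ?_
  rw [equivFinsuppOfBasisRight_apply, ← hg]
  simpa [dualTensorFun_eq_apply_rid, LinearMap.dualMap_apply', LinearMap.lTensor_comp_apply]
    using h f g

lemma injNorm_eq_zero_iff {u : E ⊗[𝕜] F} : injNorm 𝕜 u = 0 ↔ u = 0 := by
  refine ⟨fun hu => eq_zero_of_forall_dualTensorFun_eq_zero fun f g => ?_,
    fun hu => hu ▸ injNorm_zero⟩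
  simpa [hu] using norm_dualTensorFun_le_injNorm f g u

lemma opNormOn_opT_eq_zero_iff {L : (E →L[𝕜] G) ⊗[𝕜] (F →L[𝕜] H)} :
    opNormOn 𝕜 (projNorm 𝕜) (injNorm 𝕜) (opT 𝕜 L) = 0 ↔ L = 0 := by
  refine ⟨fun h => injNorm_eq_zero_iff.1 <|
    le_antisymm (h ▸ injNorm_le_opNormOn_opT L) (injNorm_nonneg L), ?_⟩
  rintro rfl
  refine le_antisymm (opNormOn_le le_rfl fun u => ?_) opNormOn_nonneg_s14
  simp [injNorm_zero]

lemma opNormOn_opT_smul (c : 𝕜) (L : (E →L[𝕜] G) ⊗[𝕜] (F →L[𝕜] H)) :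
    opNormOn 𝕜 (projNorm 𝕜) (injNorm 𝕜) (opT 𝕜 (c • L)) =
      ‖c‖ * opNormOn 𝕜 (projNorm 𝕜) (injNorm 𝕜) (opT 𝕜 L) := by
  rw [map_smul]
  exact opNormOn_smul injNorm_smul c

lemma opNormOn_opT_add_le (L L' : (E →L[𝕜] G) ⊗[𝕜] (F →L[𝕜] H)) :
    opNormOn 𝕜 (projNorm 𝕜) (injNorm 𝕜) (opT 𝕜 (L + L')) ≤
      opNormOn 𝕜 (projNorm 𝕜) (injNorm 𝕜) (opT 𝕜 L) +
        opNormOn 𝕜 (projNorm 𝕜) (injNorm 𝕜) (opT 𝕜 L') := by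
  rw [map_add]
  exact opNormOn_add_le injNorm_add_le (isBddOn_opT_s14 L) (isBddOn_opT_s14 L')

end

variable {X Y V W : Type*}
  [NormedAddCommGroup X] [NormedSpace 𝕜 X]
  [NormedAddCommGroup Y] [NormedSpace 𝕜 Y]
  [NormedAddCommGroup V] [NormedSpace 𝕜 V]
  [NormedAddCommGroup W] [NormedSpace 𝕜 W]

/-- `‖L‖_ε ≤ ‖L‖_{[π,ε]} ≤ ‖L‖_π` on `B[X,V] ⊗ B[Y,W]`, hence `‖·‖_{[π,ε]}`
is a reasonable crossnorm there. -/
theorem stmt14 :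
    (∀ L : (X →L[𝕜] V) ⊗[𝕜] (Y →L[𝕜] W),
      injNorm 𝕜 L ≤ opNormOn 𝕜 (projNorm 𝕜) (injNorm 𝕜) (opT 𝕜 L) ∧
      opNormOn 𝕜 (projNorm 𝕜) (injNorm 𝕜) (opT 𝕜 L) ≤ projNorm 𝕜 L) ∧
    IsReasonableCrossnorm 𝕜
      (fun L : (X →L[𝕜] V) ⊗[𝕜] (Y →L[𝕜] W) =>
        opNormOn 𝕜 (projNorm 𝕜) (injNorm 𝕜) (opT 𝕜 L)) := by
  refine ⟨fun L => ⟨injNorm_le_opNormOn_opT L, opNormOn_opT_le_projNorm L⟩,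
    ⟨⟨fun _ => opNormOn_opT_eq_zero_iff, opNormOn_opT_smul, opNormOn_opT_add_le⟩,
      fun A B => (opNormOn_opT_le_projNorm _).trans (projNorm_tmul_le A B), fun f g L => ?_⟩⟩
  exact (norm_dualTensorFun_le_injNorm f g L).trans
    (mul_le_mul_of_nonneg_left (injNorm_le_opNormOn_opT L) (by positivity))
end
end
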